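/- arXiv:2406.03265 — 7 statements merged into one kernel-verified Lean document; each statement's English description precedes it below -/
import Mathlib

section
/- Let C be a category with finite limits in which pullback functors on regular subobjects have left adjoints ∃ satisfying the Beck–Chevalley condition. Let f : Y → X be an arrow, Z an object, and consider the pullback square with horizontal arrows f × 1 : Y × Z → X × Z and f : Y → X and vertical projections π_Y, π_X. If S is a regular subobject of X × Z and B₁, …, Bₙ ∈ Sub_r(X) form a ∀_Z-factorization of S, then f⁻¹(B₁), …, f⁻¹(Bₙ) form a ∀_Z-factorization of (f × 1)⁻¹(S). -/
open CategoryTheory CategoryTheory.Limits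

/-- A subobject is regular if it can be represented by a regular monomorphism. -/
def IsRegSub {C : Type*} [Category C] {X : C} (P : Subobject X) : Prop :=
  Nonempty (RegularMono P.arrow)

/-- The square with `f × 1 : Y × Z ⟶ X × Z`, `f : Y ⟶ X` and the first
projections is a pullback. -/
lemma isPullback_fst_map {C : Type*} [Category C] [HasFiniteLimits C] {X Z Y : C} (f : Y ⟶ X) :
    IsPullback (prod.fst : Y ⨯ Z ⟶ Y) (prod.map f (𝟙 Z)) f (prod.fst : X ⨯ Z ⟶ X) := by
  refine ⟨⟨by simp⟩,
    ⟨PullbackCone.IsLimit.mk _ (fun s => prod.lift s.fst (s.snd ≫ prod.snd)) ?_ ?_ ?_⟩⟩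
  · intro s; exact prod.lift_fst _ _
  · intro s
    apply Limits.prod.hom_ext
    · simp [s.condition]; exact prod.lift_fst _ _
    · simp [s.condition]; exact prod.lift_snd _ _
  · intro s m h1 h2
    apply Limits.prod.hom_ext
    · exact h1.trans (prod.lift_fst _ _).symm
    · have := h2 =≫ (prod.snd : X ⨯ Z ⟶ Z)
      simp at this; exact this.trans (prod.lift_snd _ _).symm

/-- In a category with finite limits in which pullback on regular
subobjects has left adjoints `∃` satisfying Beck–Chevalley, ∀-factorizations of
regular subobjects of `X × Z` are stable under pullback along `f × 1` for any
`f : Y ⟶ X`: if `B₁, …, Bₙ` is a `∀_Z`-factorization of `S ∈ Sub_r(X × Z)`,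
then `f⁻¹ B₁, …, f⁻¹ Bₙ` is a `∀_Z`-factorization of `(f × 1)⁻¹ S`. -/
theorem stmt3 {C : Type*} [Category C] [HasFiniteLimits C]
    -- pullback preserves regular subobjects
    (hpbreg : ∀ {A B : C} (g : A ⟶ B) (P : Subobject B), IsRegSub P →
      IsRegSub ((Subobject.pullback g).obj P))
    -- the left adjoints ∃ to pullback on regular subobjects
    (E : ∀ {A B : C}, (A ⟶ B) → Subobject A → Subobject B)
    (hEreg : ∀ {A B : C} (g : A ⟶ B) (S : Subobject A), IsRegSub S → IsRegSub (E g S))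
    (hadj : ∀ {A B : C} (g : A ⟶ B) (S : Subobject A) (T : Subobject B),
      IsRegSub S → IsRegSub T →
      (E g S ≤ T ↔ S ≤ (Subobject.pullback g).obj T))
    -- the Beck–Chevalley condition
    (hbc : ∀ {W Y₁ Y₂ X : C} (p₁ : W ⟶ Y₁) (p₂ : W ⟶ Y₂) (f₁ : Y₁ ⟶ X) (f₂ : Y₂ ⟶ X),
      IsPullback p₁ p₂ f₁ f₂ → ∀ S : Subobject Y₁, IsRegSub S →
      (Subobject.pullback f₂).obj (E f₁ S) = E p₂ ((Subobject.pullback p₁).obj S))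
    {X Z Y : C} (f : Y ⟶ X) {n : ℕ}
    (S : Subobject (X ⨯ Z)) (hS : IsRegSub S)
    (B : Fin n → Subobject X) (hB : ∀ i, IsRegSub (B i))
    -- B₁, …, Bₙ is a ∀_Z-factorization of S
    (hfac1 : ∀ i, (Subobject.pullback (prod.fst : X ⨯ Z ⟶ X)).obj (B i) ≤ S)
    (hfac2 : ∀ T : Subobject X, IsRegSub T →
      (Subobject.pullback (prod.fst : X ⨯ Z ⟶ X)).obj T ≤ S → ∃ i, T ≤ B i) :
    -- f⁻¹ B₁, …, f⁻¹ Bₙ is a ∀_Z-factorization of (f × 1)⁻¹ S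
    (∀ i, (Subobject.pullback (prod.fst : Y ⨯ Z ⟶ Y)).obj ((Subobject.pullback f).obj (B i)) ≤
        (Subobject.pullback (prod.map f (𝟙 Z))).obj S) ∧
    (∀ T : Subobject Y, IsRegSub T →
      (Subobject.pullback (prod.fst : Y ⨯ Z ⟶ Y)).obj T ≤
        (Subobject.pullback (prod.map f (𝟙 Z))).obj S →
      ∃ i, T ≤ (Subobject.pullback f).obj (B i)) := by
  have hsq : (prod.fst : Y ⨯ Z ⟶ Y) ≫ f = prod.map f (𝟙 Z) ≫ (prod.fst : X ⨯ Z ⟶ X) := by simp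
  constructor
  · intro i
    rw [← Subobject.pullback_comp, hsq, Subobject.pullback_comp]
    exact (Subobject.pullback (prod.map f (𝟙 Z))).monotone (hfac1 i)
  · intro T hT hle
    -- push forward along f using Beck–Chevalley
    have hbc' := hbc (prod.fst : Y ⨯ Z ⟶ Y) (prod.map f (𝟙 Z)) f
      (prod.fst : X ⨯ Z ⟶ X) (isPullback_fst_map f) T hT
    have hETreg : IsRegSub (E f T) := hEreg f T hT
    have hpbT : IsRegSub ((Subobject.pullback (prod.fst : Y ⨯ Z ⟶ Y)).obj T) :=
      hpbreg _ _ hT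
    have h1 : E (prod.map f (𝟙 Z)) ((Subobject.pullback (prod.fst : Y ⨯ Z ⟶ Y)).obj T) ≤ S :=
      (hadj (prod.map f (𝟙 Z)) _ S hpbT hS).mpr hle
    have h2 : (Subobject.pullback (prod.fst : X ⨯ Z ⟶ X)).obj (E f T) ≤ S := by
      rw [hbc']; exact h1
    obtain ⟨i, hi⟩ := hfac2 (E f T) hETreg h2
    exact ⟨i, (hadj f T (B i) hT (hB i)).mp hi⟩
end

section
/- Let C be a category with finite limits, X and Z objects, A a regular subobject of X × Z, and B₁, …, Bₙ ∈ Sub_r(X) a ∀_Z-factorization of A. Suppose also the left adjoints ∃ to pullback on regular subobjects exist and satisfy Beck–Chevalley. Then for any arrow σ : Y → X, the top subobject of Y × Z is ≤ (σ × 1)⁻¹(A) if and only if the top subobject of Y is ≤ σ⁻¹(Bᵢ) for some i ≤ n. -/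
open CategoryTheory CategoryTheory.Limits

lemma isRegSub_top {C : Type*} [Category C] {X : C} : IsRegSub (⊤ : Subobject X) :=
  ⟨RegularMono.ofIso (asIso (⊤ : Subobject X).arrow)⟩

lemma isPullback_map_fst {C : Type*} [Category C] [HasFiniteLimits C]
    {X Z Y : C} (σ : Y ⟶ X) :
    IsPullback (prod.fst : Y ⨯ Z ⟶ Y) (prod.map σ (𝟙 Z)) σ (prod.fst : X ⨯ Z ⟶ X) := by
  refine IsPullback.of_isLimit' ⟨by simp⟩ ?_
  refine PullbackCone.IsLimit.mk _ (fun s => prod.lift s.fst (s.snd ≫ prod.snd)) ?_ ?_ ?_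
  · intro s; exact prod.lift_fst _ _
  · intro s
    apply Limits.prod.hom_ext <;> simp [← s.condition]
    · exact prod.lift_fst _ _
    · exact prod.lift_snd _ _
  · intro s m h1 h2
    apply Limits.prod.hom_ext
    · rw [prod.lift_fst]; simpa using h1
    · have := h2 =≫ (prod.snd : X ⨯ Z ⟶ Z)
      rw [prod.lift_snd]; simpa using this

/-- with finite limits, left adjoints ∃ to pullback on regular
subobjects satisfying Beck–Chevalley, and a `∀_Z`-factorization `B₁, …, Bₙ` of a
regular subobject `A` of `X × Z`: for any arrow `σ : Y ⟶ X`, the top subobject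
of `Y × Z` is ≤ `(σ × 1)⁻¹(A)` iff the top subobject of `Y` is ≤ `σ⁻¹(Bᵢ)` for
some `i`. -/
theorem stmt5 {C : Type*} [Category C] [HasFiniteLimits C]
    (hpbreg : ∀ {A B : C} (g : A ⟶ B) (P : Subobject B), IsRegSub P →
      IsRegSub ((Subobject.pullback g).obj P))
    (E : ∀ {A B : C}, (A ⟶ B) → Subobject A → Subobject B)
    (hEreg : ∀ {A B : C} (g : A ⟶ B) (S : Subobject A), IsRegSub S → IsRegSub (E g S))
    (hadj : ∀ {A B : C} (g : A ⟶ B) (S : Subobject A) (T : Subobject B),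
      IsRegSub S → IsRegSub T →
      (E g S ≤ T ↔ S ≤ (Subobject.pullback g).obj T))
    (hbc : ∀ {W Y₁ Y₂ X : C} (p₁ : W ⟶ Y₁) (p₂ : W ⟶ Y₂) (f₁ : Y₁ ⟶ X) (f₂ : Y₂ ⟶ X),
      IsPullback p₁ p₂ f₁ f₂ → ∀ S : Subobject Y₁, IsRegSub S →
      (Subobject.pullback f₂).obj (E f₁ S) = E p₂ ((Subobject.pullback p₁).obj S))
    {X Z Y : C} {n : ℕ}
    (A : Subobject (X ⨯ Z)) (hA : IsRegSub A)
    (B : Fin n → Subobject X) (hB : ∀ i, IsRegSub (B i))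
    (hfac1 : ∀ i, (Subobject.pullback (prod.fst : X ⨯ Z ⟶ X)).obj (B i) ≤ A)
    (hfac2 : ∀ T : Subobject X, IsRegSub T →
      (Subobject.pullback (prod.fst : X ⨯ Z ⟶ X)).obj T ≤ A → ∃ i, T ≤ B i)
    (σ : Y ⟶ X) :
    (⊤ : Subobject (Y ⨯ Z)) ≤ (Subobject.pullback (prod.map σ (𝟙 Z))).obj A ↔
      ∃ i, (⊤ : Subobject Y) ≤ (Subobject.pullback σ).obj (B i) := by
  have hpb := isPullback_map_fst (Z := Z) σ
  constructor
  · intro h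
    have hbc' := hbc _ _ _ _ hpb (⊤ : Subobject Y) isRegSub_top
    rw [Subobject.pullback_top] at hbc'
    have hle : (Subobject.pullback (prod.fst : X ⨯ Z ⟶ X)).obj (E σ ⊤) ≤ A := by
      rw [hbc']
      exact (hadj _ _ _ isRegSub_top hA).mpr h
    obtain ⟨i, hi⟩ := hfac2 (E σ ⊤) (hEreg _ _ isRegSub_top) hle
    exact ⟨i, (hadj _ _ _ isRegSub_top (hB i)).mp hi⟩
  · rintro ⟨i, hi⟩
    have h1 : (⊤ : Subobject (Y ⨯ Z)) ≤
        (Subobject.pullback (prod.fst : Y ⨯ Z ⟶ Y)).obj ((Subobject.pullback σ).obj (B i)) := by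
      rw [← Subobject.pullback_top (prod.fst : Y ⨯ Z ⟶ Y)]
      exact (Subobject.pullback _).monotone hi
    calc (⊤ : Subobject (Y ⨯ Z))
        ≤ (Subobject.pullback (prod.fst : Y ⨯ Z ⟶ Y)).obj
            ((Subobject.pullback σ).obj (B i)) := h1
      _ = (Subobject.pullback (prod.map σ (𝟙 Z))).obj
            ((Subobject.pullback (prod.fst : X ⨯ Z ⟶ X)).obj (B i)) := by
          rw [← Subobject.pullback_comp, ← Subobject.pullback_comp, hpb.w]
      _ ≤ (Subobject.pullback (prod.map σ (𝟙 Z))).obj A :=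
          (Subobject.pullback _).monotone (hfac1 i)
end

section
/- Let (X, ≤, S) be a finite S-poset such that every antichain α ⊆ X with α ⊄ S has a cover in S. Then for every total order-embedding of (X, ≤, S) into a finite S-poset (Y, ≤, T) (i.e. an injective totally defined S-poset morphism), there exists an S-poset morphism r : (Y, ≤, T) → (X, ≤, S) that restricts to the identity on X. -/
set_option linter.unusedVariables false

/-- S-poset morphism: partial map satisfying conditions (i)-(iv). -/
def IsSPHom {X Y : Type*} [PartialOrder X] [PartialOrder Y]
    (S : Set X) (T : Set Y) (f : X →. Y) : Prop :=
  (∀ (x y : X) (hx : x ∈ f.Dom) (hy : y ∈ f.Dom), x < y → f.fn x hx < f.fn y hy) ∧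
  (∀ (x : X) (hx : x ∈ f.Dom) (y : Y), f.fn x hx < y →
    ∃ (x' : X) (hx' : x' ∈ f.Dom), x < x' ∧ f.fn x' hx' = y) ∧
  (∀ (x : X) (hx : x ∈ f.Dom), f.fn x hx ∈ T ↔ x ∈ S) ∧
  (∀ (s x : X) (hx : x ∈ f.Dom), s ∈ S → s ≤ x →
    ∃ (s' x' : X) (hs' : s' ∈ f.Dom) (hx' : x' ∈ f.Dom),
      s ≤ s' ∧ s' ≤ x' ∧ s' ∈ S ∧ f.fn x' hx' = f.fn x hx)

section Aux

variable {X Y : Type*} [PartialOrder X] [PartialOrder Y]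

/-- The set of minimal elements of `B`. -/
def MinSet (B : Set X) : Set X := {m | m ∈ B ∧ ∀ b ∈ B, ¬ b < m}

lemma minSet_antichain (B : Set X) : IsAntichain (· ≤ ·) (MinSet B) :=
  fun a ha b hb hne hab => hb.2 a ha.1 (lt_of_le_of_ne hab hne)

lemma exists_minSet_le [Finite X] {B : Set X} {b : X} (hb : b ∈ B) :
    ∃ m ∈ MinSet B, m ≤ b := by
  have wf : WellFoundedLT X := Finite.to_wellFoundedLT
  revert hb
  refine wf.wf.induction (C := fun b => b ∈ B → ∃ m ∈ MinSet B, m ≤ b) b ?_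
  intro c ih hc
  by_cases h : ∀ b ∈ B, ¬ b < c
  · exact ⟨c, ⟨hc, h⟩, le_refl c⟩
  · push_neg at h
    obtain ⟨b', hb', hlt⟩ := h
    obtain ⟨m, hm, hle⟩ := ih b' hlt hb'
    exact ⟨m, hm, hle.trans hlt.le⟩

lemma exists_covby_le [Finite X] {c z : X} (h : c < z) : ∃ m, c ⋖ m ∧ m ≤ z := by
  obtain ⟨m, hm, hle⟩ := exists_minSet_le (B := {w | c < w ∧ w ≤ z}) ⟨h, le_refl z⟩
  refine ⟨m, ⟨hm.1.1, fun w hw hwm => ?_⟩, hm.1.2⟩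
  exact hm.2 w ⟨hw, hwm.le.trans hm.1.2⟩ hwm

variable [Finite Y]

/-- The retraction as an `Option`-valued function, defined by well-founded recursion
from the top of `Y` downwards. -/
noncomputable def retrF (S : Set X) (T : Set Y)
    (hcov : ∀ α : Set X, IsAntichain (· ≤ ·) α → ¬ α ⊆ S →
      ∃ s ∈ S, {x : X | s ⋖ x} = α)
    (e : X →. Y) (htot : ∀ x : X, x ∈ e.Dom) : Y → Option X :=
  (Finite.to_wellFoundedGT (α := Y)).wf.fix fun y ih =>
    @dite _ (∃ x, e.fn x (htot x) = y) (Classical.dec _) (fun h => some h.choose)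
      (fun _ =>
        @dite _ (y ∈ T ∧
            ¬ MinSet {x | ∃ y', ∃ h' : y' > y, ih y' h' = some x} ⊆ S)
          (Classical.dec _)
          (fun hy => some (hcov _ (minSet_antichain _) hy.2).choose)
          (fun _ => none))

variable (S : Set X) (T : Set Y)
  (hcov : ∀ α : Set X, IsAntichain (· ≤ ·) α → ¬ α ⊆ S →
      ∃ s ∈ S, {x : X | s ⋖ x} = α)
  (e : X →. Y) (htot : ∀ x : X, x ∈ e.Dom)

/-- Values of the retraction strictly above `y`. -/
def BSet (y : Y) : Set X :=
  {x | ∃ y', ∃ _ : y' > y, retrF S T hcov e htot y' = some x}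

lemma retrF_eq (y : Y) :
    retrF S T hcov e htot y =
      @dite _ (∃ x, e.fn x (htot x) = y) (Classical.dec _) (fun h => some h.choose)
        (fun _ =>
          @dite _ (y ∈ T ∧ ¬ MinSet (BSet S T hcov e htot y) ⊆ S)
            (Classical.dec _)
            (fun hy => some (hcov _ (minSet_antichain _) hy.2).choose)
            (fun _ => none)) :=
  WellFounded.fix_eq _ _ y

lemma retrF_image
    (hinj : ∀ (x y : X) (hx : x ∈ e.Dom) (hy : y ∈ e.Dom),
      e.fn x hx = e.fn y hy → x = y) (x : X) :
    retrF S T hcov e htot (e.fn x (htot x)) = some x := by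
  rw [retrF_eq]
  have h : ∃ x', e.fn x' (htot x') = e.fn x (htot x) := ⟨x, rfl⟩
  rw [dif_pos h]
  exact congrArg some (hinj _ _ _ _ h.choose_spec)

lemma retrF_some {y : Y} {x : X} (h : retrF S T hcov e htot y = some x) :
    (e.fn x (htot x) = y) ∨
    ((¬ ∃ x', e.fn x' (htot x') = y) ∧ y ∈ T ∧ x ∈ S ∧
      {z | x ⋖ z} = MinSet (BSet S T hcov e htot y) ∧
      ¬ MinSet (BSet S T hcov e htot y) ⊆ S) := by
  rw [retrF_eq] at h
  split_ifs at h with h1 h2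
  · left
    have hx : x = h1.choose := (Option.some_inj.1 h).symm
    rw [hx]; exact h1.choose_spec
  · right
    have cs := (hcov _ (minSet_antichain _) h2.2).choose_spec
    have hx : x = (hcov _ (minSet_antichain _) h2.2).choose := (Option.some_inj.1 h).symm
    exact ⟨h1, h2.1, hx ▸ cs.1, hx ▸ cs.2, h2.2⟩

lemma retrF_none {y : Y} (h : retrF S T hcov e htot y = none) (hyT : y ∈ T) :
    MinSet (BSet S T hcov e htot y) ⊆ S := by
  by_contra hS
  rw [retrF_eq] at h
  split_ifs at h with h1 h2
  exact h2 ⟨hyT, hS⟩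

end Aux

/-- Let `(X, ≤, S)` be a finite S-poset in which every antichain
`α ⊄ S` has a cover in `S` (an element of `S` whose immediate successors are
exactly `α`). Then every total order-embedding (injective totally defined
S-poset morphism) of `(X, ≤, S)` into a finite S-poset `(Y, ≤, T)` admits a
retraction: an S-poset morphism `r : Y → X` restricting to the identity
on (the image of) `X`. -/
theorem stmt10 {X Y : Type*} [PartialOrder X] [PartialOrder Y] [Finite X] [Finite Y]
    (S : Set X) (T : Set Y)
    (hcov : ∀ α : Set X, IsAntichain (· ≤ ·) α → ¬ α ⊆ S →
      ∃ s ∈ S, {x : X | s ⋖ x} = α)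
    (e : X →. Y) (he : IsSPHom S T e)
    (htot : ∀ x : X, x ∈ e.Dom)
    (hinj : ∀ (x y : X) (hx : x ∈ e.Dom) (hy : y ∈ e.Dom),
      e.fn x hx = e.fn y hy → x = y) :
    ∃ r : Y →. X, IsSPHom T S r ∧
      ∀ (x : X) (hx : x ∈ e.Dom),
        ∃ h : e.fn x hx ∈ r.Dom, r.fn (e.fn x hx) h = x := by
  classical
  set F : Y → Option X := retrF S T hcov e htot with hFdef
  -- facts about e
  have eBack : ∀ (x : X) (y : Y), e.fn x (htot x) < y →
      ∃ x', x < x' ∧ e.fn x' (htot x') = y := by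
    intro x y h
    obtain ⟨x', hx', hlt, heq⟩ := he.2.1 x (htot x) y h
    exact ⟨x', hlt, heq⟩
  have eT : ∀ x : X, e.fn x (htot x) ∈ T ↔ x ∈ S := fun x => he.2.2.1 x (htot x)
  -- key monotonicity of F
  have Fmono : ∀ {y y' : Y} {x x' : X}, y < y' → F y = some x → F y' = some x' →
      x < x' := by
    intro y y' x x' hlt h h'
    rcases retrF_some S T hcov e htot h with him | ⟨_, _, _, hsucc, _⟩
    · obtain ⟨x₁, hx₁, heq⟩ := eBack x y' (him ▸ hlt)
      have : F y' = some x₁ := heq ▸ retrF_image S T hcov e htot hinj x₁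
      have hx' : x' = x₁ := Option.some_inj.1 (h'.symm.trans this)
      exact hx' ▸ hx₁
    · have hx'B : x' ∈ BSet S T hcov e htot y := ⟨y', hlt, h'⟩
      obtain ⟨m, hm, hmle⟩ := exists_minSet_le hx'B
      have hxm : x ⋖ m := by
        have : m ∈ {z | x ⋖ z} := hsucc ▸ hm
        exact this
      exact lt_of_lt_of_le hxm.lt hmle
  -- back condition of F
  have Fback : ∀ (y : Y) {x x' : X}, F y = some x → x < x' →
      ∃ y', y < y' ∧ F y' = some x' := by
    intro y
    refine (Finite.to_wellFoundedGT (α := Y)).wf.induction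
      (C := fun y => ∀ {x x' : X}, F y = some x → x < x' →
        ∃ y', y < y' ∧ F y' = some x') y ?_
    intro y ih x x' h hlt
    rcases retrF_some S T hcov e htot h with him | ⟨_, _, _, hsucc, _⟩
    · refine ⟨e.fn x' (htot x'), ?_, retrF_image S T hcov e htot hinj x'⟩
      calc y = e.fn x (htot x) := him.symm
        _ < e.fn x' (htot x') := he.1 x x' (htot x) (htot x') hlt
    · obtain ⟨m, hcm, hmle⟩ := exists_covby_le hlt
      have hmB : m ∈ MinSet (BSet S T hcov e htot y) := by
        have : m ∈ {z | x ⋖ z} := hcm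
        exact hsucc ▸ this
      obtain ⟨y₁, hy₁, hF₁⟩ := hmB.1
      rcases eq_or_lt_of_le hmle with rfl | hmlt
      · exact ⟨y₁, hy₁, hF₁⟩
      · obtain ⟨y₂, hy₂, hF₂⟩ := ih y₁ hy₁ hF₁ hmlt
        exact ⟨y₂, lt_trans hy₁ hy₂, hF₂⟩
  -- (iii) for F
  have FT : ∀ {y : Y} {x : X}, F y = some x → (x ∈ S ↔ y ∈ T) := by
    intro y x h
    rcases retrF_some S T hcov e htot h with him | ⟨_, hyT, hxS, _, _⟩
    · rw [← him]; exact (eT x).symm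
    · exact ⟨fun _ => hyT, fun _ => hxS⟩
  -- the partial map
  set r : Y →. X := fun y => Part.ofOption (F y) with hrdef
  have hfn : ∀ (y : Y) (h : y ∈ r.Dom), F y = some (r.fn y h) := by
    intro y h
    have hmem : (Part.ofOption (F y)).get h ∈ Part.ofOption (F y) := Part.get_mem h
    exact Option.mem_def.1 (Part.mem_ofOption.1 hmem)
  have hdom : ∀ (y : Y) (x : X), F y = some x → y ∈ r.Dom := by
    intro y x h
    have : x ∈ Part.ofOption (F y) := Part.mem_ofOption.2 (Option.mem_def.2 h)
    exact Part.dom_iff_mem.2 ⟨x, this⟩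
  have hfn' : ∀ (y : Y) (x : X) (h : F y = some x) (hy : y ∈ r.Dom), r.fn y hy = x := by
    intro y x h hy
    have := hfn y hy
    exact Option.some_inj.1 (this.symm.trans h)
  refine ⟨r, ⟨?_, ?_, ?_, ?_⟩, ?_⟩
  · -- (i)
    intro y1 y2 h1 h2 hlt
    exact Fmono hlt (hfn y1 h1) (hfn y2 h2)
  · -- (ii)
    intro y h x' hlt
    obtain ⟨y', hy', hF'⟩ := Fback y (hfn y h) hlt
    exact ⟨y', hdom y' x' hF', hy', hfn' y' x' hF' _⟩
  · -- (iii)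
    intro y h
    exact FT (hfn y h)
  · -- (iv)
    intro s y hy hsT hle
    cases hFs : F s with
    | some z =>
      exact ⟨s, y, hdom s z hFs, hy, le_refl s, hle, hsT, rfl⟩
    | none =>
      have hmin : MinSet (BSet S T hcov e htot s) ⊆ S :=
        retrF_none S T hcov e htot hFs hsT
      have hFy := hfn y hy
      have hslt : s < y := by
        rcases eq_or_lt_of_le hle with rfl | h'
        · rw [hFs] at hFy; simp at hFy
        · exact h'
      have hxB : r.fn y hy ∈ BSet S T hcov e htot s := ⟨y, hslt, hFy⟩
      obtain ⟨m, hm, hmle⟩ := exists_minSet_le hxB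
      have hmS : m ∈ S := hmin hm
      obtain ⟨y₁, hy₁, hF₁⟩ := hm.1
      have hy₁T : y₁ ∈ T := (FT hF₁).1 hmS
      rcases eq_or_lt_of_le hmle with heq | hmlt
      · refine ⟨y₁, y₁, hdom y₁ m hF₁, hdom y₁ m hF₁, le_of_lt hy₁, le_refl y₁, hy₁T, ?_⟩
        rw [hfn' y₁ m hF₁ _, heq]
      · obtain ⟨y₂, hy₂, hF₂⟩ := Fback y₁ hF₁ hmlt
        refine ⟨y₁, y₂, hdom y₁ m hF₁, hdom y₂ _ hF₂, le_of_lt hy₁, le_of_lt hy₂, hy₁T, ?_⟩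
        exact hfn' y₂ _ hF₂ _
  · -- retraction
    intro x hx
    have him : F (e.fn x hx) = some x := retrF_image S T hcov e htot hinj x
    exact ⟨hdom _ x him, hfn' _ x him _⟩
end

section
/- Let (X, ≤, S) be a finite S-poset such that every antichain α ⊆ X with α ⊄ S has a cover, and let f : (X, ≤, S) → (Y, ≤, T) be a surjective S-poset morphism onto a finite S-poset. Then every antichain α ⊆ Y with α ⊄ T has a cover in T. -/
set_option linter.unusedVariables false

/-- If `(X, ≤, S)` is a finite S-poset in which every antichain
`α ⊄ S` has a cover, and `f : (X, ≤, S) → (Y, ≤, T)` is a surjective S-poset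
morphism onto a finite S-poset, then every antichain `α ⊆ Y` with `α ⊄ T` has
a cover in `T`. -/
theorem stmt11 {X Y : Type*} [PartialOrder X] [PartialOrder Y] [Finite X] [Finite Y]
    (S : Set X) (T : Set Y)
    (hcovX : ∀ α : Set X, IsAntichain (· ≤ ·) α → ¬ α ⊆ S →
      ∃ s ∈ S, {x : X | s ⋖ x} = α)
    (f : X →. Y) (hf : IsSPHom S T f)
    (hsurj : ∀ y : Y, ∃ (x : X) (hx : x ∈ f.Dom), f.fn x hx = y) :
    ∀ α : Set Y, IsAntichain (· ≤ ·) α → ¬ α ⊆ T →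
      ∃ t ∈ T, {y : Y | t ⋖ y} = α := by
  intro α hanti hnsub
  obtain ⟨y₀, hy₀α, hy₀T⟩ := Set.not_subset.mp hnsub
  obtain ⟨x₀, hx₀dom, hfx₀⟩ := hsurj y₀
  obtain ⟨hmono, hback, hT, hlift⟩ := hf
  set β : Set X := {x : X | ∃ hx : x ∈ f.Dom, f.fn x hx ∈ α} with hβdef
  have hβanti : IsAntichain (· ≤ ·) β := by
    rintro a ⟨hadom, hfa⟩ b ⟨hbdom, hfb⟩ hab hle
    have hlt : f.fn a hadom < f.fn b hbdom := hmono a b hadom hbdom (lt_of_le_of_ne hle hab)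
    exact hanti hfa hfb (ne_of_lt hlt) hlt.le
  have hx₀β : x₀ ∈ β := ⟨hx₀dom, hfx₀ ▸ hy₀α⟩
  have hx₀S : x₀ ∉ S := fun h => hy₀T (hfx₀ ▸ (hT x₀ hx₀dom).mpr h)
  obtain ⟨s, hsS, hscov⟩ := hcovX β hβanti (fun h => hx₀S (h hx₀β))
  have hcov : ∀ x, x ∈ β → s ⋖ x := fun x hx => by
    have : x ∈ {x : X | s ⋖ x} := hscov ▸ hx
    exact this
  have hsx₀ : s ⋖ x₀ := hcov x₀ hx₀β
  obtain ⟨s', x', hs'dom, hx'dom, hss', hs'x', hs'S, hfx'⟩ := hlift s x₀ hx₀dom hsS hsx₀.le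
  have hs'ne : s' ≠ x' := by
    rintro rfl
    exact hy₀T (by rw [← hfx₀, ← hfx']; exact (hT s' hx'dom).mpr hs'S)
  have hx'β : x' ∈ β := ⟨hx'dom, by rw [hfx', hfx₀]; exact hy₀α⟩
  have hs'lt : s' < x' := lt_of_le_of_ne hs'x' hs'ne
  have hseq : s = s' := by
    rcases eq_or_lt_of_le hss' with h | h
    · exact h
    · exact absurd hs'lt ((hcov x' hx'β).2 h)
  subst hseq
  have hsdom : s ∈ f.Dom := hs'dom
  refine ⟨f.fn s hsdom, (hT s hsdom).mpr hsS, ?_⟩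
  ext y
  constructor
  · intro hty
    obtain ⟨x₁, hx₁dom, hsx₁, hfx₁⟩ := hback s hsdom y hty.1
    obtain ⟨z, hsz, hzx₁⟩ := exists_covBy_le_of_lt hsx₁
    have hzβ : z ∈ β := by rw [← hscov]; exact hsz
    obtain ⟨hzdom, hfzα⟩ := hzβ
    rcases eq_or_lt_of_le hzx₁ with h | h
    · subst h; exact hfx₁ ▸ hfzα
    · have h1 : f.fn z hzdom < y := hfx₁ ▸ hmono z x₁ hzdom hx₁dom h
      have h2 : f.fn s hsdom < f.fn z hzdom := hmono s z hsdom hzdom hsz.lt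
      exact absurd h1 (hty.2 h2)
  · intro hyα
    obtain ⟨x₂, hx₂dom, hfx₂⟩ := hsurj y
    have hx₂β : x₂ ∈ β := ⟨hx₂dom, hfx₂ ▸ hyα⟩
    refine ⟨hfx₂ ▸ hmono s x₂ hsdom hx₂dom (hcov x₂ hx₂β).lt, ?_⟩
    intro z htz hzy
    obtain ⟨x₃, hx₃dom, hlt3, hfx₃⟩ := hback s hsdom z htz
    obtain ⟨x₄, hx₄dom, hlt4, hfx₄⟩ := hback x₃ hx₃dom y (hfx₃ ▸ hzy)
    have hx₄β : x₄ ∈ β := ⟨hx₄dom, hfx₄ ▸ hyα⟩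
    exact (hcov x₄ hx₄β).2 hlt3 hlt4
end

section
/- Let (X, ≤, S) be a finite S-poset, f : (X, ≤, S) → (Y, ≤, T) a surjective S-poset morphism, α ⊆ Y an antichain with α ⊄ T, and β the antichain of minimal elements of f⁻¹(α). Then f(β ∩ dom(f)) ⊇ α and β ⊄ S. -/
set_option linter.unusedVariables false

/-- Given a surjective S-poset morphism `f : (X,≤,S) → (Y,≤,T)`
between finite S-posets, an antichain `α ⊆ Y` with `α ⊄ T`, and `β` the
antichain of minimal elements of `f⁻¹(α)`, we have `f(β) ⊇ α` and `β ⊄ S`. -/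
theorem stmt12 {X Y : Type*} [PartialOrder X] [PartialOrder Y] [Finite X] [Finite Y]
    (S : Set X) (T : Set Y)
    (f : X →. Y) (hf : IsSPHom S T f)
    (hsurj : ∀ y : Y, ∃ (x : X) (hx : x ∈ f.Dom), f.fn x hx = y)
    (α : Set Y) (hα : IsAntichain (· ≤ ·) α) (hαT : ¬ α ⊆ T)
    (β : Set X)
    (hβ : β = {x : X | ∃ hx : x ∈ f.Dom, f.fn x hx ∈ α ∧
      ∀ (x' : X) (hx' : x' ∈ f.Dom), f.fn x' hx' ∈ α → x' ≤ x → x' = x}) :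
    (∀ a ∈ α, ∃ x ∈ β, ∃ hx : x ∈ f.Dom, f.fn x hx = a) ∧ ¬ β ⊆ S := by
  obtain ⟨h1, h2, h3, h4⟩ := hf
  have key : ∀ a ∈ α, ∃ x ∈ β, ∃ hx : x ∈ f.Dom, f.fn x hx = a := by
    intro a ha
    obtain ⟨x0, hx0, hfx0⟩ := hsurj a
    -- set of preimages of α below x0
    have hwf : WellFounded ((· < ·) : X → X → Prop) := wellFounded_lt
    set P : Set X := {x | ∃ hx : x ∈ f.Dom, f.fn x hx ∈ α ∧ x ≤ x0} with hP
    have hne : P.Nonempty := ⟨x0, hx0, hfx0 ▸ ha, le_refl _⟩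
    obtain ⟨m, hm, hmin⟩ := hwf.has_min P hne
    obtain ⟨hmdom, hfm, hmx0⟩ := hm
    -- f m = a
    have hfma : f.fn m hmdom = a := by
      rcases lt_or_eq_of_le hmx0 with h | h
      · have := h1 m x0 hmdom hx0 h
        rw [hfx0] at this
        exact absurd this.le (hα hfm ha this.ne)
      · subst h; exact hfx0
    refine ⟨m, ?_, hmdom, hfma⟩
    rw [hβ]
    refine ⟨hmdom, hfm, ?_⟩
    intro x' hx' hfx' hle
    by_contra hne'
    exact hmin x' ⟨hx', hfx', hle.trans hmx0⟩ (lt_of_le_of_ne hle hne')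
  refine ⟨key, ?_⟩
  obtain ⟨a, ha, haT⟩ := Set.not_subset.mp hαT
  obtain ⟨x, hxβ, hx, hfx⟩ := key a ha
  intro hβS
  exact haT (hfx ▸ (h3 x hx).mpr (hβS hxβ))
end

section
/- In a Heyting algebra arising as the algebra of upsets of a finite poset, let x be a point and y ≥ x. If x forces g and not c, and y forces p but not q (in the Kripke semantics of upset valuations), then there is a valuation extension on the poset obtained by adding a new point y' immediately above y, with y' forcing r and y not forcing r, under which x fails to force g → ((p → r) ∨ (r → q) ∨ c). -/
/-- Formulas of intuitionistic propositional logic (fragment with variables,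
implication and disjunction, enough for the formula at hand). -/
inductive IForm where
  | var : ℕ → IForm
  | impl : IForm → IForm → IForm
  | disj : IForm → IForm → IForm

/-- Kripke forcing over a preorder with an upset valuation. -/
def force {W : Type*} [Preorder W] (val : ℕ → Set W) : W → IForm → Prop
  | w, .var n => w ∈ val n
  | w, .impl a b => ∀ v, w ≤ v → force val v a → force val v b
  | w, .disj a b => force val w a ∨ force val w b

/-- Let `W` be a finite poset with an upset valuation, `x ≤ y`,
with `x` forcing `g` but not `c`, and `y` forcing `p` but not `q`. Then in any
extension of the model obtained by adding a new point `y'` immediately above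
`y` (a duplicate successor), keeping the old valuation and with `y'` forcing
`r` while `y` does not, the point `x` fails to force
`g → ((p → r) ∨ (r → q) ∨ c)`. -/
theorem stmt14 {W : Type*} [PartialOrder W] [Finite W]
    (val : ℕ → Set W) (hup : ∀ n, IsUpperSet (val n))
    (gv pv qv cv rv : ℕ)
    (hg : rv ≠ gv) (hp : rv ≠ pv) (hq : rv ≠ qv) (hc : rv ≠ cv)
    (x y : W) (hxy : x ≤ y)
    (hxg : x ∈ val gv) (hxc : x ∉ val cv) (hyp : y ∈ val pv) (hyq : y ∉ val qv) :
    ∀ (V : Type*) [PartialOrder V] (ι : W → V) (y' : V) (val' : ℕ → Set V),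
      -- ι is an order embedding of W into V
      (∀ a b : W, a ≤ b ↔ ι a ≤ ι b) →
      -- V consists of (the image of) W together with the new point y'
      (∀ v : V, (∃ w : W, ι w = v) ∨ v = y') →
      -- y' is a duplicate immediate successor of y
      (∀ w : W, ι w ≤ y' ↔ w ≤ y) →
      (∀ w : W, y' ≤ ι w ↔ y < w) →
      -- val' is an upset valuation extending val, with y' a duplicate of y
      (∀ n, IsUpperSet (val' n)) →
      (∀ n, n ≠ rv → (∀ w : W, ι w ∈ val' n ↔ w ∈ val n) ∧ (y' ∈ val' n ↔ y ∈ val n)) →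
      -- y' forces r, y does not force r
      y' ∈ val' rv → ι y ∉ val' rv →
      ¬ force val' (ι x)
        (.impl (.var gv)
          (.disj (.disj (.impl (.var pv) (.var rv)) (.impl (.var rv) (.var qv)))
            (.var cv))) := by
  intro V _ ι y' val' hemb hcov hle hge hup' hext hy'r hyr hforce
  have hg' := (hext gv (Ne.symm hg)).1 x
  have hforced := hforce (ι x) le_rfl (hg'.mpr hxg)
  rcases hforced with (hpr | hrq) | hcv
  · -- p → r at ι x, apply at ι y
    have hyp' : force val' (ι y) (.var pv) := ((hext pv (Ne.symm hp)).1 y).mpr hyp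
    exact hyr (hpr (ι y) ((hemb x y).mp hxy) hyp')
  · -- r → q at ι x, apply at y'
    have hxy' : ι x ≤ y' := (hle x).mpr hxy
    have := hrq y' hxy' hy'r
    exact hyq ((hext qv (Ne.symm hq)).2.mp this)
  · exact hxc (((hext cv (Ne.symm hc)).1 x).mp hcv)
end

section
/- Let C be a finite set of variables. A substitution σ on the term algebra over variables p̄ ⊇ C is C-invariant (fixes each variable in C and sends every other variable to a term not containing variables of C) if and only if the induced homomorphism of free algebras F(X ∪ C) → F(X' ∪ C) decomposes (up to the coproduct isomorphisms F(X ∪ C) ≅ F(X) + F(C)) as σ̄ + id_{F(C)} for some homomorphism σ̄ : F(X) → F(X'), where X = p̄ \ C. -/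
open FirstOrder

lemma varFinset_relabel {L : FirstOrder.Language} {α β : Type*} [DecidableEq α] [DecidableEq β]
    (f : α → β) (t : L.Term α) :
    (t.relabel f).varFinset = t.varFinset.image f := by
  induction t with
  | var v => simp [Language.Term.relabel, Language.Term.varFinset]
  | func F ts ih =>
      simp only [Language.Term.relabel, Language.Term.varFinset, ih]
      ext b
      simp only [Finset.mem_biUnion, Finset.mem_univ, true_and, Finset.mem_image]
      tauto

lemma exists_relabel {L : FirstOrder.Language} {X' C : Type*} [DecidableEq X'] [DecidableEq C]
    (t : L.Term (X' ⊕ C)) (h : ∀ c : C, Sum.inr c ∉ t.varFinset) :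
    ∃ s : L.Term X', s.relabel Sum.inl = t := by
  induction t with
  | var v =>
      cases v with
      | inl x => exact ⟨Language.Term.var x, rfl⟩
      | inr c => exact absurd (Finset.mem_singleton_self _) (h c)
  | func F ts ih =>
      have h' : ∀ i, ∃ s : L.Term X', s.relabel Sum.inl = ts i := by
        intro i
        refine ih i (fun c hc => h c ?_)
        simp only [Language.Term.varFinset, Finset.mem_biUnion]
        exact ⟨i, Finset.mem_univ _, hc⟩
      choose s hs using h'
      exact ⟨Language.Term.func F s, by simp [Language.Term.relabel, hs]⟩

/-- A substitution `σ` over variables `X ⊕ C` is `C`-invariant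
(fixes the variables of `C` and maps variables of `X` to terms not containing
variables of `C`) iff the induced homomorphism of term algebras decomposes as
`σ̄ + id_{F(C)}` for some substitution `σ̄ : X → Term X'` (i.e. via the
coproduct decomposition `F(X ∪ C) ≅ F(X) + F(C)`). -/
theorem stmt17 (L : FirstOrder.Language) (X C X' : Type*)
    [DecidableEq X'] [DecidableEq C]
    (σ : X ⊕ C → L.Term (X' ⊕ C)) :
    ((∀ c : C, σ (Sum.inr c) = FirstOrder.Language.Term.var (Sum.inr c)) ∧
      (∀ (x : X) (c : C), Sum.inr c ∉ (σ (Sum.inl x)).varFinset)) ↔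
    (∃ σb : X → L.Term X',
      (∀ c : C, σ (Sum.inr c) = FirstOrder.Language.Term.var (Sum.inr c)) ∧
      ∀ t : L.Term (X ⊕ C),
        t.subst σ =
          t.subst (Sum.elim (fun x => (σb x).relabel Sum.inl)
            (fun c => FirstOrder.Language.Term.var (Sum.inr c)))) := by
  constructor
  · rintro ⟨h1, h2⟩
    choose σb hσb using fun x => exists_relabel (σ (Sum.inl x)) (h2 x)
    refine ⟨σb, h1, fun t => ?_⟩
    have : σ = Sum.elim (fun x => (σb x).relabel Sum.inl)
        (fun c => Language.Term.var (Sum.inr c)) := by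
      funext v
      cases v with
      | inl x => exact (hσb x).symm
      | inr c => exact h1 c
    rw [this]
  · rintro ⟨σb, h1, h2⟩
    refine ⟨h1, fun x c => ?_⟩
    have := h2 (Language.Term.var (Sum.inl x))
    simp only [Language.Term.subst, Sum.elim_inl] at this
    rw [this, varFinset_relabel]
    simp
end
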